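/- arXiv:1011.3900 — 2 statements merged into one kernel-verified Lean document; each statement's English description precedes it below -/
import Mathlib

section
/- The antisymmetric tensor product of operators is associative: for linear operators Xⱼ on Hⱼ (j = 1, 2, 3), the operator (X₁ ⊗̂ X₂) ⊗̂ X₃ on (H₁ ⊗ H₂) ⊗ H₃ — formed using the composite parity θ₁₂ = θ₁ ⊗ θ₂ on H₁ ⊗ H₂ — corresponds to the operator X₁ ⊗̂ (X₂ ⊗̂ X₃) on H₁ ⊗ (H₂ ⊗ H₃) under the canonical associativity isomorphism of tensor products; that is, conjugating (X₁ ⊗̂ X₂) ⊗̂ X₃ by the associator yields X₁ ⊗̂ (X₂ ⊗̂ X₃). -/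
/-- Even part `X₊ = (X + θXθ)/2` of an operator with respect to a parity `θ`. -/
noncomputable def evenPart {K : Type*} [AddCommGroup K] [Module ℂ K]
    (θ X : K →ₗ[ℂ] K) : K →ₗ[ℂ] K :=
  (2⁻¹ : ℂ) • (X + θ ∘ₗ X ∘ₗ θ)

/-- Odd part `X₋ = (X − θXθ)/2` of an operator with respect to a parity `θ`. -/
noncomputable def oddPart {K : Type*} [AddCommGroup K] [Module ℂ K]
    (θ X : K →ₗ[ℂ] K) : K →ₗ[ℂ] K :=
  (2⁻¹ : ℂ) • (X - θ ∘ₗ X ∘ₗ θ)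

/-- Antisymmetric tensor product `X ⊗̂ Y = X ⊗ Y₊ + (Xθ) ⊗ Y₋` of operators. -/
noncomputable def hatTensor {H K : Type*} [AddCommGroup H] [Module ℂ H]
    [AddCommGroup K] [Module ℂ K]
    (θ : H →ₗ[ℂ] H) (θ' : K →ₗ[ℂ] K) (X : H →ₗ[ℂ] H) (Y : K →ₗ[ℂ] K) :
    TensorProduct ℂ H K →ₗ[ℂ] TensorProduct ℂ H K :=
  TensorProduct.map X (evenPart θ' Y) + TensorProduct.map (X ∘ₗ θ) (oddPart θ' Y)

/-!
Splitting every operator into its even and odd part, both sides expand into the same four terms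
`X₁ ⊗ X₂₊ ⊗ X₃₊ + X₁θ₁ ⊗ X₂₋ ⊗ X₃₊ + X₁θ₁ ⊗ X₂₊θ₂ ⊗ X₃₋ + X₁ ⊗ X₂₋θ₂ ⊗ X₃₋`.
On the left, `θ₁² = 1` absorbs the parity in `(X₁ ⊗̂ X₂)(θ₁ ⊗ θ₂)`. On the right, the parts of
`X ⊗ Y` for the parity `θ ⊗ θ'` are `X₊ ⊗ Y₊ + X₋ ⊗ Y₋` (even) and `X₊ ⊗ Y₋ + X₋ ⊗ Y₊` (odd),
and `θ₃² = 1` makes `X₃₊` even and `X₃₋` odd.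
-/

open TensorProduct

section Parts

variable {K : Type*} [AddCommGroup K] [Module ℂ K]

theorem evenPart_add (θ X Y : K →ₗ[ℂ] K) :
    evenPart θ (X + Y) = evenPart θ X + evenPart θ Y := by
  simp only [evenPart, LinearMap.add_comp, LinearMap.comp_add]
  module

theorem oddPart_add (θ X Y : K →ₗ[ℂ] K) :
    oddPart θ (X + Y) = oddPart θ X + oddPart θ Y := by
  simp only [oddPart, LinearMap.add_comp, LinearMap.comp_add]
  module

theorem evenPart_comp_parity (θ X : K →ₗ[ℂ] K) :
    evenPart θ (X ∘ₗ θ) = evenPart θ X ∘ₗ θ := by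
  simp only [evenPart, LinearMap.smul_comp, LinearMap.add_comp, LinearMap.comp_assoc]

theorem oddPart_comp_parity (θ X : K →ₗ[ℂ] K) :
    oddPart θ (X ∘ₗ θ) = oddPart θ X ∘ₗ θ := by
  simp only [oddPart, LinearMap.smul_comp, LinearMap.sub_comp, LinearMap.comp_assoc]

variable {θ : K →ₗ[ℂ] K}

theorem conj_evenPart (hθ : θ ∘ₗ θ = LinearMap.id) (X : K →ₗ[ℂ] K) :
    θ ∘ₗ evenPart θ X ∘ₗ θ = evenPart θ X := by
  simp only [evenPart, LinearMap.comp_smul, LinearMap.smul_comp, LinearMap.comp_add,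
    LinearMap.add_comp, ← LinearMap.comp_assoc, hθ, LinearMap.id_comp]
  simp only [LinearMap.comp_assoc, hθ, LinearMap.comp_id, add_comm]

theorem conj_oddPart (hθ : θ ∘ₗ θ = LinearMap.id) (X : K →ₗ[ℂ] K) :
    θ ∘ₗ oddPart θ X ∘ₗ θ = -oddPart θ X := by
  simp only [oddPart, LinearMap.comp_smul, LinearMap.smul_comp, LinearMap.comp_sub,
    LinearMap.sub_comp, ← LinearMap.comp_assoc, hθ, LinearMap.id_comp]
  simp only [LinearMap.comp_assoc, hθ, LinearMap.comp_id]
  module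

theorem evenPart_evenPart (hθ : θ ∘ₗ θ = LinearMap.id) (X : K →ₗ[ℂ] K) :
    evenPart θ (evenPart θ X) = evenPart θ X := by
  change (2⁻¹ : ℂ) • (evenPart θ X + θ ∘ₗ evenPart θ X ∘ₗ θ) = _
  rw [conj_evenPart hθ]
  module

theorem oddPart_evenPart (hθ : θ ∘ₗ θ = LinearMap.id) (X : K →ₗ[ℂ] K) :
    oddPart θ (evenPart θ X) = 0 := by
  rw [oddPart, conj_evenPart hθ, sub_self, smul_zero]

theorem evenPart_oddPart (hθ : θ ∘ₗ θ = LinearMap.id) (X : K →ₗ[ℂ] K) :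
    evenPart θ (oddPart θ X) = 0 := by
  rw [evenPart, conj_oddPart hθ, add_neg_cancel, smul_zero]

theorem oddPart_oddPart (hθ : θ ∘ₗ θ = LinearMap.id) (X : K →ₗ[ℂ] K) :
    oddPart θ (oddPart θ X) = oddPart θ X := by
  change (2⁻¹ : ℂ) • (oddPart θ X - θ ∘ₗ oddPart θ X ∘ₗ θ) = _
  rw [conj_oddPart hθ]
  module

end Parts

section TensorParity

variable {H K : Type*} [AddCommGroup H] [Module ℂ H] [AddCommGroup K] [Module ℂ K]

theorem evenPart_map (θ A : H →ₗ[ℂ] H) (θ' B : K →ₗ[ℂ] K) :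
    evenPart (map θ θ') (map A B) =
      map (evenPart θ A) (evenPart θ' B) + map (oddPart θ A) (oddPart θ' B) := by
  refine TensorProduct.ext' fun x y => ?_
  simp only [evenPart, oddPart, LinearMap.add_apply, LinearMap.smul_apply, LinearMap.sub_apply,
    LinearMap.comp_apply, map_tmul, tmul_add, add_tmul, tmul_sub, sub_tmul, tmul_smul,
    ← smul_tmul']
  module

theorem oddPart_map (θ A : H →ₗ[ℂ] H) (θ' B : K →ₗ[ℂ] K) :
    oddPart (map θ θ') (map A B) =
      map (evenPart θ A) (oddPart θ' B) + map (oddPart θ A) (evenPart θ' B) := by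
  refine TensorProduct.ext' fun x y => ?_
  simp only [evenPart, oddPart, LinearMap.add_apply, LinearMap.smul_apply, LinearMap.sub_apply,
    LinearMap.comp_apply, map_tmul, tmul_add, add_tmul, tmul_sub, sub_tmul, tmul_smul,
    ← smul_tmul']
  module

variable {θ : H →ₗ[ℂ] H} {θ' : K →ₗ[ℂ] K} (X : H →ₗ[ℂ] H) (Y : K →ₗ[ℂ] K)

theorem hatTensor_comp_map (hθ : θ ∘ₗ θ = LinearMap.id) :
    hatTensor θ θ' X Y ∘ₗ map θ θ' =
      map (X ∘ₗ θ) (evenPart θ' Y ∘ₗ θ') + map X (oddPart θ' Y ∘ₗ θ') := by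
  rw [hatTensor, LinearMap.add_comp, ← map_comp, ← map_comp, LinearMap.comp_assoc, hθ,
    LinearMap.comp_id]

theorem evenPart_hatTensor (hθ' : θ' ∘ₗ θ' = LinearMap.id) :
    evenPart (map θ θ') (hatTensor θ θ' X Y) =
      map (evenPart θ X) (evenPart θ' Y) + map (oddPart θ X ∘ₗ θ) (oddPart θ' Y) := by
  rw [hatTensor, evenPart_add, evenPart_map, evenPart_map, evenPart_evenPart hθ',
    oddPart_evenPart hθ', evenPart_oddPart hθ', oddPart_oddPart hθ', oddPart_comp_parity,
    map_zero_right, map_zero_right, add_zero, zero_add]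

theorem oddPart_hatTensor (hθ' : θ' ∘ₗ θ' = LinearMap.id) :
    oddPart (map θ θ') (hatTensor θ θ' X Y) =
      map (oddPart θ X) (evenPart θ' Y) + map (evenPart θ X ∘ₗ θ) (oddPart θ' Y) := by
  rw [hatTensor, oddPart_add, oddPart_map, oddPart_map, evenPart_evenPart hθ',
    oddPart_evenPart hθ', evenPart_oddPart hθ', oddPart_oddPart hθ', evenPart_comp_parity,
    map_zero_right, map_zero_right, add_zero, zero_add, add_comm]

end TensorParity

theorem TensorProduct.assoc_comp_map_map_comp_assoc_symm {R M N P Q S T : Type*}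
    [CommSemiring R] [AddCommMonoid M] [AddCommMonoid N] [AddCommMonoid P] [AddCommMonoid Q]
    [AddCommMonoid S] [AddCommMonoid T] [Module R M] [Module R N] [Module R P] [Module R Q]
    [Module R S] [Module R T] (f : M →ₗ[R] Q) (g : N →ₗ[R] S) (h : P →ₗ[R] T) :
    (TensorProduct.assoc R Q S T).toLinearMap ∘ₗ map (map f g) h ∘ₗ
        (TensorProduct.assoc R M N P).symm.toLinearMap = map f (map g h) := by
  ext; rfl

theorem hatTensor_assoc_general
    {H₁ H₂ H₃ : Type*} [AddCommGroup H₁] [Module ℂ H₁] [AddCommGroup H₂] [Module ℂ H₂]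
    [AddCommGroup H₃] [Module ℂ H₃]
    (θ₁ : H₁ →ₗ[ℂ] H₁) (θ₂ : H₂ →ₗ[ℂ] H₂) (θ₃ : H₃ →ₗ[ℂ] H₃)
    (h₁ : θ₁ ∘ₗ θ₁ = LinearMap.id)
    (h₃ : θ₃ ∘ₗ θ₃ = LinearMap.id)
    (X₁ : H₁ →ₗ[ℂ] H₁) (X₂ : H₂ →ₗ[ℂ] H₂) (X₃ : H₃ →ₗ[ℂ] H₃) :
    (TensorProduct.assoc ℂ H₁ H₂ H₃).toLinearMap ∘ₗ
        hatTensor (TensorProduct.map θ₁ θ₂) θ₃ (hatTensor θ₁ θ₂ X₁ X₂) X₃ ∘ₗ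
        (TensorProduct.assoc ℂ H₁ H₂ H₃).symm.toLinearMap
      = hatTensor θ₁ (TensorProduct.map θ₂ θ₃) X₁ (hatTensor θ₂ θ₃ X₂ X₃) := by
  have left : hatTensor (map θ₁ θ₂) θ₃ (hatTensor θ₁ θ₂ X₁ X₂) X₃ =
      map (map X₁ (evenPart θ₂ X₂)) (evenPart θ₃ X₃) +
        map (map (X₁ ∘ₗ θ₁) (oddPart θ₂ X₂)) (evenPart θ₃ X₃) +
        (map (map (X₁ ∘ₗ θ₁) (evenPart θ₂ X₂ ∘ₗ θ₂)) (oddPart θ₃ X₃) +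
          map (map X₁ (oddPart θ₂ X₂ ∘ₗ θ₂)) (oddPart θ₃ X₃)) := by
    rw [hatTensor, hatTensor_comp_map _ _ h₁, hatTensor, map_add_left, map_add_left]
  have right : hatTensor θ₁ (map θ₂ θ₃) X₁ (hatTensor θ₂ θ₃ X₂ X₃) =
      map X₁ (map (evenPart θ₂ X₂) (evenPart θ₃ X₃)) +
        map (X₁ ∘ₗ θ₁) (map (oddPart θ₂ X₂) (evenPart θ₃ X₃)) +
        (map (X₁ ∘ₗ θ₁) (map (evenPart θ₂ X₂ ∘ₗ θ₂) (oddPart θ₃ X₃)) +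
          map X₁ (map (oddPart θ₂ X₂ ∘ₗ θ₂) (oddPart θ₃ X₃))) := by
    rw [hatTensor, evenPart_hatTensor _ _ h₃, oddPart_hatTensor _ _ h₃, map_add_right,
      map_add_right]
    abel
  rw [left, right]
  simp only [LinearMap.add_comp, LinearMap.comp_add, assoc_comp_map_map_comp_assoc_symm]

/-- Associativity of the antisymmetric tensor product of operators: conjugating
`(X₁ ⊗̂ X₂) ⊗̂ X₃` (formed with the composite parity `θ₁ ⊗ θ₂` on `H₁ ⊗ H₂`) by the
canonical associator of tensor products yields `X₁ ⊗̂ (X₂ ⊗̂ X₃)` (formed with the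
composite parity `θ₂ ⊗ θ₃` on `H₂ ⊗ H₃`). -/
theorem hatTensor_assoc
    {H₁ H₂ H₃ : Type*} [AddCommGroup H₁] [Module ℂ H₁] [AddCommGroup H₂] [Module ℂ H₂]
    [AddCommGroup H₃] [Module ℂ H₃]
    (θ₁ : H₁ →ₗ[ℂ] H₁) (θ₂ : H₂ →ₗ[ℂ] H₂) (θ₃ : H₃ →ₗ[ℂ] H₃)
    (h₁ : θ₁ ∘ₗ θ₁ = LinearMap.id) (h₂ : θ₂ ∘ₗ θ₂ = LinearMap.id)
    (h₃ : θ₃ ∘ₗ θ₃ = LinearMap.id)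
    (X₁ : H₁ →ₗ[ℂ] H₁) (X₂ : H₂ →ₗ[ℂ] H₂) (X₃ : H₃ →ₗ[ℂ] H₃) :
    (TensorProduct.assoc ℂ H₁ H₂ H₃).toLinearMap ∘ₗ
        hatTensor (TensorProduct.map θ₁ θ₂) θ₃ (hatTensor θ₁ θ₂ X₁ X₂) X₃ ∘ₗ
        (TensorProduct.assoc ℂ H₁ H₂ H₃).symm.toLinearMap
      = hatTensor θ₁ (TensorProduct.map θ₂ θ₃) X₁ (hatTensor θ₂ θ₃ X₂ X₃) :=
  hatTensor_assoc_general θ₁ θ₂ θ₃ h₁ h₃ X₁ X₂ X₃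
end

section
/- Let ξ and V be independent real random variables on a probability space, with ξ Gaussian with mean ξ̄ and variance Σ_ξ ≥ 0, and V standard Gaussian (mean 0, variance 1). Let Y = ξ + V. Then the conditional expectation of ξ given the σ-algebra generated by Y is given almost surely by E[ξ | σ(Y)] = ξ̄ + Σ_ξ (1 + Σ_ξ)⁻¹ (Y − ξ̄). -/
/-!
With `Y = ξ + V` and `c = Σ_ξ / (1 + Σ_ξ) = cov[ξ, Y] / Var[Y]`, the residual `ξ - c Y` is a linear
image of the Gaussian vector `(ξ, V)`, hence jointly Gaussian with `Y`, and it is uncorrelated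
with `Y`. Uncorrelated jointly Gaussian variables are independent, so `E[ξ - c Y | σ(Y)]` is the
constant `E[ξ - c Y]`, while `E[c Y | σ(Y)] = c Y`.
-/

open MeasureTheory ProbabilityTheory

namespace ProbabilityTheory

variable {Ω : Type*} {mΩ : MeasurableSpace Ω} {P : Measure Ω} [IsProbabilityMeasure P]

lemma condExp_comap_eq_of_indepFun_sub_mul {X Y : Ω → ℝ} {c : ℝ}
    (hXm : Measurable X) (hYm : Measurable Y) (hX : Integrable X P) (hY : Integrable Y P)
    (hindep : IndepFun (fun ω ↦ X ω - c * Y ω) Y P) :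
    P[X | MeasurableSpace.comap Y inferInstance] =ᵐ[P] fun ω ↦ P[X] + c * (Y ω - P[Y]) := by
  set R : Ω → ℝ := fun ω ↦ X ω - c * Y ω
  have hR : Integrable R P := hX.sub (hY.const_mul c)
  have hRm : Measurable R := hXm.sub (hYm.const_mul c)
  have hYσ : StronglyMeasurable[MeasurableSpace.comap Y inferInstance] (fun ω ↦ c * Y ω) :=
    ((comap_measurable Y).const_mul c).stronglyMeasurable
  have hcondR : P[R | MeasurableSpace.comap Y inferInstance] =ᵐ[P] fun _ ↦ P[R] :=
    condExp_indep_eq hRm.comap_le hYm.comap_le (comap_measurable R).stronglyMeasurable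
      ((IndepFun_iff_Indep R Y P).1 hindep)
  have hcondY : P[fun ω ↦ c * Y ω | MeasurableSpace.comap Y inferInstance] = fun ω ↦ c * Y ω :=
    condExp_of_stronglyMeasurable hYm.comap_le hYσ (hY.const_mul c)
  have hmeanR : P[R] = P[X] - c * P[Y] := by
    rw [integral_sub hX (hY.const_mul c), integral_const_mul]
  have hXeq : X = R + fun ω ↦ c * Y ω := by ext ω; simp [R]
  have hsum := condExp_add hR (hY.const_mul c) (MeasurableSpace.comap Y inferInstance)
  rw [← hXeq, hcondY] at hsum
  filter_upwards [hsum, hcondR] with ω hω hωR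
  rw [hω, Pi.add_apply, hωR, hmeanR]
  ring

lemma HasGaussianLaw.condExp_comap_eq {X Y : Ω → ℝ} {c : ℝ} (hXm : Measurable X)
    (hYm : Measurable Y) (hXY : HasGaussianLaw (fun ω ↦ (X ω, Y ω)) P)
    (hc : cov[X, Y; P] = c * Var[Y; P]) :
    P[X | MeasurableSpace.comap Y inferInstance] =ᵐ[P] fun ω ↦ P[X] + c * (Y ω - P[Y]) := by
  have hX := hXY.fst
  have hY := hXY.snd
  have hresidual : HasGaussianLaw (fun ω ↦ (X ω - c * Y ω, Y ω)) P := by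
    simpa using hXY.map_fun
      ((ContinuousLinearMap.fst ℝ ℝ ℝ - c • ContinuousLinearMap.snd ℝ ℝ ℝ).prod
        (ContinuousLinearMap.snd ℝ ℝ ℝ))
  have hcov : cov[fun ω ↦ X ω - c * Y ω, Y; P] = 0 := by
    rw [covariance_fun_sub_left hX.memLp_two (hY.memLp_two.const_mul c) hY.memLp_two,
      covariance_const_mul_left, covariance_self hYm.aemeasurable, hc, sub_self]
  exact condExp_comap_eq_of_indepFun_sub_mul hXm hYm hX.integrable hY.integrable
    (hresidual.indepFun_of_covariance_eq_zero hcov)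

end ProbabilityTheory

/-- For independent Gaussian random variables `ξ ~ N(ξ̄, Σ_ξ)` and `V ~ N(0, 1)` and
`Y = ξ + V`, the conditional expectation of `ξ` given `σ(Y)` is
`ξ̄ + Σ_ξ (1 + Σ_ξ)⁻¹ (Y − ξ̄)` almost surely. -/
theorem gaussian_conditional_mean
    {Ω : Type*} [MeasureSpace Ω] [IsProbabilityMeasure (ℙ : Measure Ω)]
    (ξ V : Ω → ℝ) (hξm : Measurable ξ) (hVm : Measurable V)
    (hindep : IndepFun ξ V)
    (ξbar : ℝ) (Sξ : NNReal)
    (hξ : Measure.map ξ ℙ = gaussianReal ξbar Sξ)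
    (hV : Measure.map V ℙ = gaussianReal 0 1) :
    ℙ[ξ | MeasurableSpace.comap (fun ω => ξ ω + V ω) inferInstance]
      =ᵐ[ℙ] fun ω => ξbar + (Sξ : ℝ) * (1 + (Sξ : ℝ))⁻¹ * ((ξ ω + V ω) - ξbar) := by
  have hξlaw : HasLaw ξ (gaussianReal ξbar Sξ) := ⟨hξm.aemeasurable, hξ⟩
  have hVlaw : HasLaw V (gaussianReal 0 1) := ⟨hVm.aemeasurable, hV⟩
  have hξG := hξlaw.hasGaussianLaw
  have hVG := hVlaw.hasGaussianLaw
  have hjoint : HasGaussianLaw (fun ω ↦ (ξ ω, ξ ω + V ω)) ℙ := by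
    simpa using (hindep.hasGaussianLaw hξG hVG).map_fun
      ((ContinuousLinearMap.fst ℝ ℝ ℝ).prod
        (ContinuousLinearMap.fst ℝ ℝ ℝ + ContinuousLinearMap.snd ℝ ℝ ℝ))
  have hmeanξ : ℙ[ξ] = ξbar := by rw [hξlaw.integral_eq, integral_id_gaussianReal]
  have hmeanV : ℙ[V] = 0 := by rw [hVlaw.integral_eq, integral_id_gaussianReal]
  have hvarξ : Var[ξ; ℙ] = Sξ := by rw [hξlaw.variance_eq, variance_id_gaussianReal]
  have hvarV : Var[V; ℙ] = 1 := by rw [hVlaw.variance_eq, variance_id_gaussianReal]; simp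
  have hcovξV : cov[ξ, V; ℙ] = 0 := hindep.covariance_eq_zero hξG.memLp_two hVG.memLp_two
  have hcov : cov[ξ, ξ + V; ℙ] = (Sξ : ℝ) * (1 + (Sξ : ℝ))⁻¹ * Var[ξ + V; ℙ] := by
    rw [covariance_add_right hξG.memLp_two hξG.memLp_two hVG.memLp_two,
      covariance_self hξm.aemeasurable, hindep.variance_add hξG.memLp_two hVG.memLp_two,
      hvarξ, hvarV, hcovξV]
    field_simp
    ring
  filter_upwards [hjoint.condExp_comap_eq hξm (hξm.add hVm) hcov] with ω hω
  rw [integral_add' hξG.integrable hVG.integrable, hmeanξ, hmeanV, add_zero] at hω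
  exact hω
end
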